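/- arXiv:0802.0248 — 3 statements merged into one kernel-verified Lean document; each statement's English description precedes it below -/
import Mathlib

section
/- Let h be a positive continuous function on (0,1) with h(t) → 0 as t → 0⁺. Let (r_n) be a sequence in (0,1) with ∑ h(1-r_n) < ∞. Let p, q > 0 be such that t ↦ h(t)/t^p is decreasing and t ↦ h(t)/t^(p-q) is increasing on (0,1). Then there exists C > 0 such that for all r ∈ (0,1), ∑_{n=1}^∞ (1-r_n)^p/(1-r·r_n)^q ≤ C / ((1-r)^(q-p) · h(1-r)). -/
/-! Put `m = 1 - s rₙ`, which dominates both `a = 1 - rₙ` and `b = 1 - s`. Since `h(t)/tᵖ`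
decreases, `h(m) aᵖ ≤ h(a) mᵖ`; since `h(t)/t^(p-q)` increases, `h(b) b^(q-p) ≤ h(m) m^(q-p)`.
Multiplying, `aᵖ / m^q ≤ h(a) / (b^(q-p) h(b))`, and summing over `n` gives the bound with
`C = ∑ h(1 - rₙ)`. -/

open Set Filter Topology

theorem rpow_div_rpow_le_of_antitoneOn_of_monotoneOn {h : ℝ → ℝ} {S : Set ℝ} {p q a b m : ℝ}
    (hdec : AntitoneOn (fun t => h t / t ^ p) S)
    (hinc : MonotoneOn (fun t => h t / t ^ (p - q)) S)
    (ha : a ∈ S) (hb : b ∈ S) (hm : m ∈ S) (ha0 : 0 < a) (hb0 : 0 < b)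
    (ham : a ≤ m) (hbm : b ≤ m) (hhb : 0 < h b) :
    a ^ p / m ^ q ≤ h a / (b ^ (q - p) * h b) := by
  have hm0 : 0 < m := ha0.trans_le ham
  have hap : 0 < a ^ p := Real.rpow_pos_of_pos ha0 p
  have hmp : 0 < m ^ p := Real.rpow_pos_of_pos hm0 p
  have hdec' : h m * a ^ p ≤ h a * m ^ p := by
    have : h m / m ^ p ≤ h a / a ^ p := hdec ha hm ham
    rwa [div_le_div_iff₀ hmp hap] at this
  have hinc' : h b * b ^ (q - p) ≤ h m * m ^ (q - p) := by
    have : h b / b ^ (p - q) ≤ h m / m ^ (p - q) := hinc hb hm hbm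
    rwa [← neg_sub, Real.rpow_neg hb0.le, Real.rpow_neg hm0.le, div_inv_eq_mul,
      div_inv_eq_mul] at this
  rw [div_le_div_iff₀ (Real.rpow_pos_of_pos hm0 q)
    (mul_pos (Real.rpow_pos_of_pos hb0 _) hhb)]
  calc a ^ p * (b ^ (q - p) * h b) = (h b * b ^ (q - p)) * a ^ p := by ring
    _ ≤ (h m * m ^ (q - p)) * a ^ p := by gcongr
    _ = (h m * a ^ p) * m ^ (q - p) := by ring
    _ ≤ (h a * m ^ p) * m ^ (q - p) := by gcongr
    _ = h a * m ^ q := by rw [mul_assoc, ← Real.rpow_add hm0, add_sub_cancel]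

theorem one_sub_mul_mem_Ioo {s x : ℝ} (hs : s ∈ Ioo (0:ℝ) 1) (hx : x ∈ Ioo (0:ℝ) 1) :
    1 - s * x ∈ Ioo (0:ℝ) 1 ∧ 1 - x ≤ 1 - s * x ∧ 1 - s ≤ 1 - s * x := by
  obtain ⟨hs0, hs1⟩ := hs
  obtain ⟨hx0, hx1⟩ := hx
  refine ⟨⟨?_, ?_⟩, ?_, ?_⟩ <;> nlinarith

theorem one_sub_mem_Ioo {x : ℝ} (hx : x ∈ Ioo (0:ℝ) 1) : 1 - x ∈ Ioo (0:ℝ) 1 :=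
  ⟨by linarith [hx.2], by linarith [hx.1]⟩

theorem estimation_lemma_bigO_general (h : ℝ → ℝ) (r : ℕ → ℝ)
    (hpos : ∀ t ∈ Ioo (0:ℝ) 1, 0 < h t)
    (hr : ∀ n, r n ∈ Ioo (0:ℝ) 1)
    (hsum : Summable fun n => h (1 - r n))
    (p q : ℝ)
    (hdec : AntitoneOn (fun t => h t / t ^ p) (Ioo 0 1))
    (hinc : MonotoneOn (fun t => h t / t ^ (p - q)) (Ioo 0 1)) :
    ∃ C > 0, ∀ s ∈ Ioo (0:ℝ) 1,
      (∑' n, (1 - r n) ^ p / (1 - s * r n) ^ q) ≤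
        C / ((1 - s) ^ (q - p) * h (1 - s)) := by
  have hpos_r : ∀ n, 0 < h (1 - r n) := fun n => hpos _ (one_sub_mem_Ioo (hr n))
  refine ⟨∑' n, h (1 - r n), hsum.tsum_pos (fun n => (hpos_r n).le) 0 (hpos_r 0), ?_⟩
  intro s hs
  have hb := one_sub_mem_Ioo hs
  have hterm : ∀ n, (1 - r n) ^ p / (1 - s * r n) ^ q ≤
      h (1 - r n) / ((1 - s) ^ (q - p) * h (1 - s)) := fun n => by
    obtain ⟨hm, ham, hbm⟩ := one_sub_mul_mem_Ioo hs (hr n)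
    have ha := one_sub_mem_Ioo (hr n)
    exact rpow_div_rpow_le_of_antitoneOn_of_monotoneOn hdec hinc ha hb hm ha.1 hb.1 ham hbm
      (hpos _ hb)
  have hnonneg : ∀ n, 0 ≤ (1 - r n) ^ p / (1 - s * r n) ^ q := fun n =>
    div_nonneg (Real.rpow_nonneg (one_sub_mem_Ioo (hr n)).1.le _)
      (Real.rpow_nonneg (one_sub_mul_mem_Ioo hs (hr n)).1.1.le _)
  calc (∑' n, (1 - r n) ^ p / (1 - s * r n) ^ q)
      ≤ ∑' n, h (1 - r n) / ((1 - s) ^ (q - p) * h (1 - s)) :=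
        (Summable.of_nonneg_of_le hnonneg hterm (hsum.div_const _)).tsum_le_tsum hterm
          (hsum.div_const _)
    _ = (∑' n, h (1 - r n)) / ((1 - s) ^ (q - p) * h (1 - s)) := tsum_div_const

theorem estimation_lemma_bigO (h : ℝ → ℝ) (r : ℕ → ℝ)
    (hcont : ContinuousOn h (Ioo 0 1)) (hpos : ∀ t ∈ Ioo (0:ℝ) 1, 0 < h t)
    (hlim : Tendsto h (𝓝[>] 0) (𝓝 0))
    (hr : ∀ n, r n ∈ Ioo (0:ℝ) 1)
    (hsum : Summable fun n => h (1 - r n))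
    (p q : ℝ) (hp : 0 < p) (hq : 0 < q)
    (hdec : AntitoneOn (fun t => h t / t ^ p) (Ioo 0 1))
    (hinc : MonotoneOn (fun t => h t / t ^ (p - q)) (Ioo 0 1)) :
    ∃ C > 0, ∀ s ∈ Ioo (0:ℝ) 1,
      (∑' n, (1 - r n) ^ p / (1 - s * r n) ^ q) ≤
        C / ((1 - s) ^ (q - p) * h (1 - s)) :=
  estimation_lemma_bigO_general h r hpos hr hsum p q hdec hinc
end

section
/- Let h be a positive continuous function on (0,1) with h(t) → 0 as t → 0⁺, and (r_n) a sequence in (0,1) with ∑ h(1-r_n) < ∞. Let p, q > 0 with h(t)/t^p decreasing and h(t)/t^(p-q) increasing on (0,1), and additionally h(t)/t^(p-q) → 0 as t → 0⁺. Then (1-r)^(q-p) · h(1-r) · ∑_{n=1}^∞ (1-r_n)^p/(1-r·r_n)^q → 0 as r → 1⁻. -/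
open Set Filter Topology

/-!
Write `t = 1 - s` and `u = 1 - r_n`. Since `1 - s r_n` dominates both `t` and `u`, the monotonicity
of `h(t)/t^p` (when `u ≤ t`) or of `h(t)/t^(p-q)` (when `t ≤ u`) bounds the `n`-th term
`t^(q-p) h(t) u^p / (1 - s r_n)^q` by `h(u)`, uniformly in `s`. The bound is summable, and each term
tends to `0` because `t^(q-p) h(t) = h(t)/t^(p-q) → 0`, so dominated convergence for series finishes.
-/

lemma tendsto_one_sub_nhdsLT_one : Tendsto (fun s : ℝ => 1 - s) (𝓝[<] 1) (𝓝[>] 0) := by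
  have h := (Filter.map_subLeft_nhdsLT (c := (1 : ℝ)) (a := 1)).le
  rwa [sub_self] at h

lemma rpow_sub_mul_mul_div_rpow_le {h : ℝ → ℝ} {p q t u D : ℝ} (hq : 0 ≤ q)
    (hdec : AntitoneOn (fun t => h t / t ^ p) (Ioo 0 1))
    (hinc : MonotoneOn (fun t => h t / t ^ (p - q)) (Ioo 0 1))
    (ht : t ∈ Ioo 0 1) (hu : u ∈ Ioo 0 1) (hht : 0 ≤ h t) (htD : t ≤ D) (huD : u ≤ D) :
    t ^ (q - p) * h t * (u ^ p / D ^ q) ≤ h u := by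
  have ht0 := ht.1
  have hu0 := hu.1
  have hD : 0 < D := ht0.trans_le htD
  rcases le_total u t with hut | htu
  · have hratio : (t / D) ^ q ≤ 1 :=
      Real.rpow_le_one (by positivity) ((div_le_one hD).2 htD) hq
    calc t ^ (q - p) * h t * (u ^ p / D ^ q)
        = h t / t ^ p * u ^ p * (t / D) ^ q := by
          rw [Real.div_rpow ht0.le hD.le, Real.rpow_sub ht0]
          field_simp
      _ ≤ h t / t ^ p * u ^ p := mul_le_of_le_one_right (by positivity) hratio
      _ ≤ h u / u ^ p * u ^ p :=
          mul_le_mul_of_nonneg_right (hdec hu ht hut) (by positivity)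
      _ = h u := by field_simp
  · have hratio : (u / D) ^ q ≤ 1 :=
      Real.rpow_le_one (by positivity) ((div_le_one hD).2 huD) hq
    calc t ^ (q - p) * h t * (u ^ p / D ^ q)
        = h t / t ^ (p - q) * u ^ (p - q) * (u / D) ^ q := by
          rw [Real.div_rpow hu0.le hD.le, Real.rpow_sub ht0, Real.rpow_sub ht0, Real.rpow_sub hu0]
          field_simp
      _ ≤ h t / t ^ (p - q) * u ^ (p - q) := mul_le_of_le_one_right (by positivity) hratio
      _ ≤ h u / u ^ (p - q) * u ^ (p - q) :=
          mul_le_mul_of_nonneg_right (hinc ht hu htu) (by positivity)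
      _ = h u := by field_simp

lemma one_sub_mem_Ioo_s1 {s : ℝ} (hs : s ∈ Ioo 0 1) : 1 - s ∈ Ioo (0 : ℝ) 1 :=
  ⟨by linarith [hs.2], by linarith [hs.1]⟩

lemma norm_one_sub_rpow_mul_div_le {h : ℝ → ℝ} {p q s ρ : ℝ} (hq : 0 ≤ q)
    (hdec : AntitoneOn (fun t => h t / t ^ p) (Ioo 0 1))
    (hinc : MonotoneOn (fun t => h t / t ^ (p - q)) (Ioo 0 1))
    (hs : s ∈ Ioo 0 1) (hρ : ρ ∈ Ioo 0 1) (hh : 0 ≤ h (1 - s)) :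
    ‖(1 - s) ^ (q - p) * h (1 - s) * ((1 - ρ) ^ p / (1 - s * ρ) ^ q)‖ ≤ h (1 - ρ) := by
  obtain ⟨hs0, hs1⟩ := hs
  obtain ⟨hρ0, hρ1⟩ := hρ
  have htD : 1 - s ≤ 1 - s * ρ := by nlinarith
  have huD : 1 - ρ ≤ 1 - s * ρ := by nlinarith
  have hD : 0 < 1 - s * ρ := by nlinarith
  have ht : 0 < 1 - s := by linarith
  rw [Real.norm_of_nonneg (by positivity)]
  exact rpow_sub_mul_mul_div_rpow_le hq hdec hinc (one_sub_mem_Ioo_s1 ⟨hs0, hs1⟩)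
    (one_sub_mem_Ioo_s1 ⟨hρ0, hρ1⟩) hh htD huD

lemma tendsto_rpow_div_one_sub_mul_rpow {ρ : ℝ} (p q : ℝ) (hρ : ρ < 1) :
    Tendsto (fun s => (1 - ρ) ^ p / (1 - s * ρ) ^ q) (𝓝[<] 1) (𝓝 ((1 - ρ) ^ p / (1 - ρ) ^ q)) := by
  have hu : 0 < 1 - ρ := sub_pos.2 hρ
  have hden : ContinuousAt (fun s => (1 - s * ρ) ^ q) 1 :=
    (continuousAt_const.sub (continuousAt_id.mul continuousAt_const)).rpow_const
      (Or.inl (by simpa using hu.ne'))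
  have hcont : ContinuousAt (fun s => (1 - ρ) ^ p / (1 - s * ρ) ^ q) 1 :=
    continuousAt_const.div hden (by simpa using (Real.rpow_pos_of_pos hu q).ne')
  simpa using hcont.tendsto.mono_left nhdsWithin_le_nhds

theorem estimation_lemma_littleO_general (h : ℝ → ℝ) (r : ℕ → ℝ)
    (hpos : ∀ t ∈ Ioo (0:ℝ) 1, 0 < h t)
    (hr : ∀ n, r n ∈ Ioo (0:ℝ) 1)
    (hsum : Summable fun n => h (1 - r n))
    (p q : ℝ) (hq : 0 < q)
    (hdec : AntitoneOn (fun t => h t / t ^ p) (Ioo 0 1))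
    (hinc : MonotoneOn (fun t => h t / t ^ (p - q)) (Ioo 0 1))
    (hvan : Tendsto (fun t => h t / t ^ (p - q)) (𝓝[>] 0) (𝓝 0)) :
    Tendsto (fun s : ℝ =>
        (1 - s) ^ (q - p) * h (1 - s) * ∑' n, (1 - r n) ^ p / (1 - s * r n) ^ q)
      (𝓝[<] 1) (𝓝 0) := by
  have hfactor : Tendsto (fun s => (1 - s) ^ (q - p) * h (1 - s)) (𝓝[<] 1) (𝓝 0) := by
    refine (hvan.comp tendsto_one_sub_nhdsLT_one).congr' ?_
    filter_upwards [self_mem_nhdsWithin] with s hs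
    rw [Function.comp_apply, div_eq_mul_inv, ← Real.rpow_neg (sub_pos.2 hs).le, neg_sub,
      mul_comm]
  have hbound : ∀ᶠ s in 𝓝[<] 1, ∀ n,
      ‖(1 - s) ^ (q - p) * h (1 - s) * ((1 - r n) ^ p / (1 - s * r n) ^ q)‖ ≤ h (1 - r n) := by
    filter_upwards [Ioo_mem_nhdsLT zero_lt_one] with s hs n
    exact norm_one_sub_rpow_mul_div_le hq.le hdec hinc hs (hr n) (hpos _ (one_sub_mem_Ioo_s1 hs)).le
  have hlim := tendsto_tsum_of_dominated_convergence (g := fun _ => (0 : ℝ)) hsum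
    (fun n => by simpa using hfactor.mul (tendsto_rpow_div_one_sub_mul_rpow p q (hr n).2)) hbound
  rw [tsum_zero] at hlim
  simpa only [tsum_mul_left] using hlim

theorem estimation_lemma_littleO (h : ℝ → ℝ) (r : ℕ → ℝ)
    (hcont : ContinuousOn h (Ioo 0 1)) (hpos : ∀ t ∈ Ioo (0:ℝ) 1, 0 < h t)
    (hlim : Tendsto h (𝓝[>] 0) (𝓝 0))
    (hr : ∀ n, r n ∈ Ioo (0:ℝ) 1)
    (hsum : Summable fun n => h (1 - r n))
    (p q : ℝ) (hp : 0 < p) (hq : 0 < q)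
    (hdec : AntitoneOn (fun t => h t / t ^ p) (Ioo 0 1))
    (hinc : MonotoneOn (fun t => h t / t ^ (p - q)) (Ioo 0 1))
    (hvan : Tendsto (fun t => h t / t ^ (p - q)) (𝓝[>] 0) (𝓝 0)) :
    Tendsto (fun s : ℝ =>
        (1 - s) ^ (q - p) * h (1 - s) * ∑' n, (1 - r n) ^ p / (1 - s * r n) ^ q)
      (𝓝[<] 1) (𝓝 0) :=
  estimation_lemma_littleO_general h r hpos hr hsum p q hq hdec hinc hvan
end

section
/- Let B be a Blaschke product with zeros z_n = r_n e^{iθ_n} satisfying ∑ h(1-r_n) < ∞ for a positive continuous function h with h(t) → 0 as t → 0⁺. Suppose there is q ∈ (1/2, 1] such that h(t)/t^q is decreasing and h(t)/t^(1-q) is increasing on (0,1). Then for every p ≥ q, ∫_0^{2π} |B'(r e^{iθ})|^p dθ = O(1/((1-r)^(p-1) h(1-r))) as r → 1⁻. -/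
open Set Filter Topology Complex Asymptotics

noncomputable def blaschkeProduct (z : ℕ → ℂ) : ℂ → ℂ := fun w =>
  ∏' n, (((‖z n‖ : ℝ) : ℂ) / z n) * ((z n - w) / (1 - (starRingEnd ℂ) (z n) * w))

/-!
Write `s = 1 - ‖a‖` for a zero `a` and `t = 1 - r`. The derivative of a finite Blaschke product
is at most `∑ (1 - ‖a‖²) / ‖1 - conj a * w‖²`, and as `q ≤ 1` the `q`-th power of this sum is at
most the sum of `q`-th powers. Since `2q > 1`, the kernel estimate
`∫ ‖1 - c e^{iθ}‖^{-2q} dθ ≲ (1 - ‖c‖)^{1-2q}` bounds the contribution of `a` on the circle of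
radius `r` by `s^q (1 - ‖a‖ r)^{1-2q}`, where `1 - ‖a‖ r ≥ max s t`; the two monotonicity
hypotheses on `h` turn this into `h(s) t^{1-q} / h(t)`. Summing over the zeros and passing from
partial products to `B` by dominated convergence gives `∫ ‖B'‖^q ≲ t^{1-q} / h(t)`. For `p ≥ q`
one more factor `‖B'‖^{p-q} ≤ (2/t)^{p-q}` comes from the Cauchy estimate for the bounded `B`.
-/

open Metric MeasureTheory
open scoped Real Interval

noncomputable def blaschkeFactor (a w : ℂ) : ℂ :=
  (((‖a‖ : ℝ) : ℂ) / a) * ((a - w) / (1 - (starRingEnd ℂ) a * w))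

namespace blaschkeFactor

variable {a w : ℂ}

lemma one_sub_norm_mul_norm_le : 1 - ‖a‖ * ‖w‖ ≤ ‖1 - (starRingEnd ℂ) a * w‖ := by
  simpa using norm_sub_norm_le (1 : ℂ) ((starRingEnd ℂ) a * w)

lemma norm_one_sub_conj_mul_pos (ha : ‖a‖ < 1) (hw : ‖w‖ < 1) : 0 < ‖1 - (starRingEnd ℂ) a * w‖ :=
  lt_of_lt_of_le (by nlinarith [norm_nonneg a, norm_nonneg w]) one_sub_norm_mul_norm_le

lemma one_sub_conj_mul_ne_zero (ha : ‖a‖ < 1) (hw : ‖w‖ < 1) : 1 - (starRingEnd ℂ) a * w ≠ 0 :=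
  norm_pos_iff.mp (norm_one_sub_conj_mul_pos ha hw)

lemma norm_ofReal_norm_div_le_one : ‖((‖a‖ : ℝ) : ℂ) / a‖ ≤ 1 := by
  rw [norm_div, norm_real, norm_norm]
  exact div_self_le_one _

lemma norm_sub_le_norm_one_sub_conj_mul (ha : ‖a‖ < 1) (hw : ‖w‖ < 1) :
    ‖a - w‖ ≤ ‖1 - (starRingEnd ℂ) a * w‖ := by
  have hnormSq : ‖1 - (starRingEnd ℂ) a * w‖ ^ 2 - ‖a - w‖ ^ 2 = (1 - ‖a‖ ^ 2) * (1 - ‖w‖ ^ 2) := by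
    simp only [← normSq_eq_norm_sq, normSq_apply, sub_re, sub_im, mul_re, mul_im, conj_re,
      conj_im, one_re, one_im]
    ring
  have hprod : 0 ≤ (1 - ‖a‖ ^ 2) * (1 - ‖w‖ ^ 2) :=
    mul_nonneg (by nlinarith [norm_nonneg a]) (by nlinarith [norm_nonneg w])
  exact (pow_le_pow_iff_left₀ (norm_nonneg _) (norm_nonneg _) two_ne_zero).mp (by linarith)

lemma norm_le_one (ha : ‖a‖ < 1) (hw : ‖w‖ < 1) : ‖blaschkeFactor a w‖ ≤ 1 := by
  rw [blaschkeFactor, norm_mul]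
  refine mul_le_one₀ norm_ofReal_norm_div_le_one (norm_nonneg _) ?_
  rw [norm_div, div_le_one (norm_one_sub_conj_mul_pos ha hw)]
  exact norm_sub_le_norm_one_sub_conj_mul ha hw

lemma norm_sub_one_le (ha : ‖a‖ < 1) (ha0 : a ≠ 0) (hw : ‖w‖ < 1) :
    ‖blaschkeFactor a w - 1‖ ≤ 2 * (1 - ‖a‖) / (1 - ‖w‖) := by
  have hden := one_sub_conj_mul_ne_zero ha hw
  have hden' : 1 - ‖w‖ ≤ ‖1 - (starRingEnd ℂ) a * w‖ :=
    le_trans (by nlinarith [norm_nonneg a, norm_nonneg w]) one_sub_norm_mul_norm_le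
  have hformula : blaschkeFactor a w - 1 = ((‖a‖ : ℝ) - 1 : ℂ) * (a + (‖a‖ : ℝ) * w) /
      (a * (1 - (starRingEnd ℂ) a * w)) := by
    rw [blaschkeFactor, div_mul_div_comm, div_sub_one (mul_ne_zero ha0 hden)]
    congr 1
    linear_combination w * conj_mul' a
  have hnum : ‖a + ((‖a‖ : ℝ) : ℂ) * w‖ ≤ 2 * ‖a‖ := by
    calc ‖a + ((‖a‖ : ℝ) : ℂ) * w‖ ≤ ‖a‖ + ‖a‖ * ‖w‖ := by
          simpa [norm_mul] using norm_add_le a (((‖a‖ : ℝ) : ℂ) * w)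
      _ ≤ 2 * ‖a‖ := by nlinarith [norm_nonneg a]
  have hfac : ‖((‖a‖ : ℝ) - 1 : ℂ)‖ = 1 - ‖a‖ := by
    rw [← ofReal_one, ← ofReal_sub, norm_real, Real.norm_eq_abs, abs_of_nonpos (by linarith),
      neg_sub]
  rw [hformula, norm_div, norm_mul, norm_mul, hfac,
    div_le_div_iff₀ (by positivity [norm_pos_iff.mpr ha0, norm_pos_iff.mpr hden]) (by linarith)]
  calc (1 - ‖a‖) * ‖a + ((‖a‖ : ℝ) : ℂ) * w‖ * (1 - ‖w‖)
      ≤ (1 - ‖a‖) * (2 * ‖a‖) * ‖1 - (starRingEnd ℂ) a * w‖ := by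
        gcongr
    _ = 2 * (1 - ‖a‖) * (‖a‖ * ‖1 - (starRingEnd ℂ) a * w‖) := by ring

lemma hasDerivAt (hden : 1 - (starRingEnd ℂ) a * w ≠ 0) :
    HasDerivAt (blaschkeFactor a)
      ((((‖a‖ : ℝ) : ℂ) / a) * ((((‖a‖ : ℝ) : ℂ) ^ 2 - 1) / (1 - (starRingEnd ℂ) a * w) ^ 2))
      w := by
  have hnum : HasDerivAt (fun x => a - x) (-1) w := by
    simpa using (hasDerivAt_id w).const_sub a
  have hdenom : HasDerivAt (fun x => 1 - (starRingEnd ℂ) a * x) (-(starRingEnd ℂ) a) w := by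
    simpa using ((hasDerivAt_id w).const_mul ((starRingEnd ℂ) a)).const_sub 1
  have hderiv := (hnum.div hdenom hden).const_mul (((‖a‖ : ℝ) : ℂ) / a)
  rwa [show -1 * (1 - (starRingEnd ℂ) a * w) - (a - w) * -(starRingEnd ℂ) a
    = ((‖a‖ : ℝ) : ℂ) ^ 2 - 1 by linear_combination conj_mul' a] at hderiv

lemma norm_deriv (ha : ‖a‖ < 1) (ha0 : a ≠ 0) (hw : ‖w‖ < 1) :
    ‖deriv (blaschkeFactor a) w‖ = (1 - ‖a‖ ^ 2) / ‖1 - (starRingEnd ℂ) a * w‖ ^ 2 := by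
  have hnum : ((‖a‖ : ℝ) : ℂ) ^ 2 - 1 = ((‖a‖ ^ 2 - 1 : ℝ) : ℂ) := by push_cast; ring
  rw [(hasDerivAt (one_sub_conj_mul_ne_zero ha hw)).deriv, norm_mul, norm_div, norm_div, norm_pow,
    hnum, norm_real, norm_real, norm_norm, div_self (norm_ne_zero_iff.mpr ha0), one_mul,
    Real.norm_eq_abs, abs_of_nonpos (by nlinarith [norm_nonneg a]), neg_sub]

lemma differentiableOn (ha : ‖a‖ < 1) : DifferentiableOn ℂ (blaschkeFactor a) (ball 0 1) :=
  fun _ hw => (hasDerivAt (one_sub_conj_mul_ne_zero ha (mem_ball_zero_iff.mp hw))).differentiableAt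
    |>.differentiableWithinAt

end blaschkeFactor

lemma norm_deriv_le_two_div_of_norm_le_one {E : Type*} [NormedAddCommGroup E] [NormedSpace ℂ E]
    {f : ℂ → E} (hd : DifferentiableOn ℂ f (ball 0 1)) (hf : ∀ w ∈ ball (0 : ℂ) 1, ‖f w‖ ≤ 1)
    {w : ℂ} (hw : ‖w‖ < 1) : ‖deriv f w‖ ≤ 2 / (1 - ‖w‖) := by
  have hsub : ball w (1 - ‖w‖) ⊆ ball 0 1 := by
    simpa using ball_subset_ball' (x := w) (y := 0) (ε₁ := 1 - ‖w‖) (ε₂ := 1) (by simp)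
  refine Complex.norm_deriv_le_div_of_mapsTo_ball (hd.mono hsub) (fun x hx => ?_) (by linarith)
  rw [mem_closedBall, dist_eq_norm]
  exact (norm_sub_le _ _).trans (by linarith [hf x (hsub hx), hf w (mem_ball_zero_iff.mpr hw)])

lemma norm_deriv_finset_prod_le {𝕜 𝔸 ι : Type*} [NontriviallyNormedField 𝕜] [NormedCommRing 𝔸]
    [NormedAlgebra 𝕜 𝔸] [NormOneClass 𝔸] [DecidableEq ι] (s : Finset ι) {f : ι → 𝕜 → 𝔸} {x : 𝕜}
    (hd : ∀ i ∈ s, DifferentiableAt 𝕜 (f i) x) (hf : ∀ i ∈ s, ‖f i x‖ ≤ 1) :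
    ‖deriv (fun y => ∏ i ∈ s, f i y) x‖ ≤ ∑ i ∈ s, ‖deriv (f i) x‖ := by
  rw [(HasDerivAt.fun_finsetProd fun i hi => (hd i hi).hasDerivAt).deriv]
  refine (norm_sum_le _ _).trans (Finset.sum_le_sum fun i hi => ?_)
  refine (norm_smul_le _ _).trans (mul_le_of_le_one_left (norm_nonneg _) ?_)
  exact (Finset.norm_prod_le _ _).trans
    (Finset.prod_le_one (fun _ _ => norm_nonneg _) fun j hj => hf j (Finset.mem_of_mem_erase hj))

lemma continuous_deriv_comp_circleMap {f : ℂ → ℂ} (hf : DifferentiableOn ℂ f (ball 0 1)) {r : ℝ}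
    (hr : |r| < 1) : Continuous fun θ => deriv f (circleMap 0 r θ) :=
  (hf.deriv isOpen_ball).continuousOn.comp_continuous (continuous_circleMap 0 r) fun θ => by
    rwa [mem_ball_zero_iff, norm_circleMap_zero]

section BlaschkeProduct

variable {z : ℕ → ℂ}

lemma hasProdUniformlyOn_blaschkeFactor (hz : ∀ n, z n ∈ ball (0 : ℂ) 1) (hz0 : ∀ n, z n ≠ 0)
    (hb : Summable fun n => 1 - ‖z n‖) {ρ : ℝ} (hρ : ρ < 1) :
    HasProdUniformlyOn (fun n => blaschkeFactor (z n)) (blaschkeProduct z) (closedBall 0 ρ) := by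
  have hz' n : ‖z n‖ < 1 := mem_ball_zero_iff.mp (hz n)
  have hsub : closedBall (0 : ℂ) ρ ⊆ ball 0 1 := closedBall_subset_ball hρ
  have hprod := Summable.hasProdUniformlyOn_nat_one_add (f := fun n w => blaschkeFactor (z n) w - 1)
    (isCompact_closedBall 0 ρ) ((hb.mul_left 2).div_const (1 - ρ))
    (Eventually.of_forall fun n w hw => (blaschkeFactor.norm_sub_one_le (hz' n) (hz0 n)
      (mem_ball_zero_iff.mp (hsub hw))).trans (by
        have := mem_closedBall_zero_iff.mp hw
        gcongr
        linarith [hz' n]))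
    fun n => ((blaschkeFactor.differentiableOn (hz' n)).continuousOn.mono hsub).sub
      continuousOn_const
  simp only [add_sub_cancel] at hprod
  exact hprod

lemma tendstoLocallyUniformlyOn_blaschkeProduct (hz : ∀ n, z n ∈ ball (0 : ℂ) 1)
    (hz0 : ∀ n, z n ≠ 0) (hb : Summable fun n => 1 - ‖z n‖) :
    TendstoLocallyUniformlyOn (fun N w => ∏ n ∈ Finset.range N, blaschkeFactor (z n) w)
      (blaschkeProduct z) atTop (ball 0 1) := by
  refine HasProdLocallyUniformlyOn.tendstoLocallyUniformlyOn_finsetRange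
    (hasProdLocallyUniformlyOn_of_of_forall_exists_nhds fun w hw => ?_)
  have hw' := mem_ball_zero_iff.mp hw
  refine ⟨closedBall 0 ((1 + ‖w‖) / 2), mem_nhdsWithin_of_mem_nhds
    (closedBall_mem_nhds_of_mem (mem_ball_zero_iff.mpr (by linarith))),
    hasProdUniformlyOn_blaschkeFactor hz hz0 hb (by linarith)⟩

lemma norm_partialProduct_le_one (hz : ∀ n, z n ∈ ball (0 : ℂ) 1) (N : ℕ) {w : ℂ}
    (hw : w ∈ ball (0 : ℂ) 1) : ‖∏ n ∈ Finset.range N, blaschkeFactor (z n) w‖ ≤ 1 :=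
  (Finset.norm_prod_le _ _).trans (Finset.prod_le_one (fun _ _ => norm_nonneg _) fun n _ =>
    blaschkeFactor.norm_le_one (mem_ball_zero_iff.mp (hz n)) (mem_ball_zero_iff.mp hw))

lemma differentiableOn_partialProduct (hz : ∀ n, z n ∈ ball (0 : ℂ) 1) (N : ℕ) :
    DifferentiableOn ℂ (fun w => ∏ n ∈ Finset.range N, blaschkeFactor (z n) w) (ball 0 1) :=
  DifferentiableOn.fun_finsetProd fun n _ =>
    blaschkeFactor.differentiableOn (mem_ball_zero_iff.mp (hz n))

lemma differentiableOn_blaschkeProduct (hz : ∀ n, z n ∈ ball (0 : ℂ) 1) (hz0 : ∀ n, z n ≠ 0)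
    (hb : Summable fun n => 1 - ‖z n‖) : DifferentiableOn ℂ (blaschkeProduct z) (ball 0 1) :=
  (tendstoLocallyUniformlyOn_blaschkeProduct hz hz0 hb).differentiableOn
    (Eventually.of_forall (differentiableOn_partialProduct hz)) isOpen_ball

lemma norm_blaschkeProduct_le_one (hz : ∀ n, z n ∈ ball (0 : ℂ) 1) (hz0 : ∀ n, z n ≠ 0)
    (hb : Summable fun n => 1 - ‖z n‖) {w : ℂ} (hw : w ∈ ball (0 : ℂ) 1) :
    ‖blaschkeProduct z w‖ ≤ 1 :=
  le_of_tendsto ((tendstoLocallyUniformlyOn_blaschkeProduct hz hz0 hb).tendsto_at hw).norm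
    (Eventually.of_forall fun N => norm_partialProduct_le_one hz N hw)

lemma norm_deriv_partialProduct_le (hz : ∀ n, z n ∈ ball (0 : ℂ) 1) (N : ℕ) {w : ℂ}
    (hw : ‖w‖ < 1) :
    ‖deriv (fun x => ∏ n ∈ Finset.range N, blaschkeFactor (z n) x) w‖ ≤ 2 / (1 - ‖w‖) :=
  norm_deriv_le_two_div_of_norm_le_one (differentiableOn_partialProduct hz N)
    (fun _ => norm_partialProduct_le_one hz N) hw

lemma norm_deriv_blaschkeProduct_le (hz : ∀ n, z n ∈ ball (0 : ℂ) 1) (hz0 : ∀ n, z n ≠ 0)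
    (hb : Summable fun n => 1 - ‖z n‖) {w : ℂ} (hw : ‖w‖ < 1) :
    ‖deriv (blaschkeProduct z) w‖ ≤ 2 / (1 - ‖w‖) :=
  norm_deriv_le_two_div_of_norm_le_one (differentiableOn_blaschkeProduct hz hz0 hb)
    (fun _ => norm_blaschkeProduct_le_one hz hz0 hb) hw

lemma tendsto_deriv_partialProduct (hz : ∀ n, z n ∈ ball (0 : ℂ) 1) (hz0 : ∀ n, z n ≠ 0)
    (hb : Summable fun n => 1 - ‖z n‖) {w : ℂ} (hw : w ∈ ball (0 : ℂ) 1) :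
    Tendsto (fun N => deriv (fun x => ∏ n ∈ Finset.range N, blaschkeFactor (z n) x) w) atTop
      (𝓝 (deriv (blaschkeProduct z) w)) :=
  ((tendstoLocallyUniformlyOn_blaschkeProduct hz hz0 hb).deriv
    (Eventually.of_forall (differentiableOn_partialProduct hz)) isOpen_ball).tendsto_at hw

end BlaschkeProduct

open Real in
lemma norm_one_sub_mul_exp_sq (ρ θ : ℝ) :
    ‖1 - (ρ : ℂ) * exp (θ * I)‖ ^ 2 = (1 - ρ) ^ 2 + 2 * ρ * (1 - Real.cos θ) := by
  rw [← normSq_eq_norm_sq, normSq_apply]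
  simp only [sub_re, sub_im, one_re, one_im, re_ofReal_mul, im_ofReal_mul, exp_ofReal_mul_I_re,
    exp_ofReal_mul_I_im]
  linear_combination ρ ^ 2 * Real.sin_sq_add_cos_sq θ

open Real in
lemma one_sub_add_abs_div_le_two_mul_norm {ρ θ : ℝ} (hρ0 : 0 ≤ ρ) (hρ1 : ρ ≤ 1) (hθ : |θ| ≤ π) :
    1 - ρ + |θ| / (2 * π) ≤ 2 * ‖1 - (ρ : ℂ) * exp (θ * I)‖ := by
  set x := |θ| / (2 * π)
  have hx0 : 0 ≤ x := by positivity
  have hx1 : x ≤ 1 / 2 := by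
    rw [div_le_iff₀ (by positivity)]; linarith
  have hcos : 8 * x ^ 2 ≤ 1 - Real.cos θ := by
    have := Real.cos_le_one_sub_mul_cos_sq hθ
    have hθx : θ ^ 2 = 4 * π ^ 2 * x ^ 2 := by
      simp only [x, div_pow, ← sq_abs θ]; field_simp; ring
    rw [hθx] at this
    have : 2 / π ^ 2 * (4 * π ^ 2 * x ^ 2) = 8 * x ^ 2 := by field_simp; ring
    linarith
  have hsq : (1 - ρ + x) ^ 2 ≤ (2 * ‖1 - (ρ : ℂ) * exp (θ * I)‖) ^ 2 := by
    rw [mul_pow, norm_one_sub_mul_exp_sq]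
    have hρcos : 16 * ρ * x ^ 2 ≤ 2 * ρ * (1 - Real.cos θ) := by nlinarith
    have hsum : (1 - ρ + x) ^ 2 ≤ 2 * (1 - ρ) ^ 2 + 2 * x ^ 2 := by
      nlinarith [sq_nonneg (1 - ρ - x)]
    rcases le_or_gt (1 / 32) ρ with hρ | hρ
    · nlinarith
    · nlinarith
  exact (pow_le_pow_iff_left₀ (by linarith) (by positivity) two_ne_zero).mp hsq

lemma intervalIntegral_comp_abs (F : ℝ → ℝ) {a : ℝ} (ha : 0 ≤ a)
    (hF : IntervalIntegrable (fun x => F |x|) volume (-a) a) :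
    ∫ x in -a..a, F |x| = 2 * ∫ x in 0..a, F x := by
  have hpos : ∫ x in 0..a, F |x| = ∫ x in 0..a, F x :=
    intervalIntegral.integral_congr fun x hx => by
      rw [abs_of_nonneg (by rw [uIcc_of_le ha] at hx; exact hx.1)]
  have hneg : ∫ x in -a..0, F |x| = ∫ x in 0..a, F |x| := by
    simpa using (intervalIntegral.integral_comp_neg (a := 0) (b := a) fun x => F |x|).symm
  rw [← intervalIntegral.integral_add_adjacent_intervals (b := 0)
    (hF.mono_set (uIcc_subset_uIcc_left (by simp [uIcc_of_le, ha])))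
    (hF.mono_set (uIcc_subset_uIcc_right (by simp [uIcc_of_le, ha]))), hneg, hpos]
  ring

open Real in
lemma continuous_add_abs_div_rpow {d : ℝ} (hd : 0 < d) (α : ℝ) :
    Continuous fun θ : ℝ => (d + |θ| / (2 * π)) ^ (-α) :=
  (continuous_const.add (continuous_abs.div_const _)).rpow_const
    fun _ => Or.inl (ne_of_gt (add_pos_of_pos_of_nonneg hd (by positivity)))

open Real in
lemma integral_add_abs_div_rpow_le {d α : ℝ} (hd : 0 < d) (hα : 1 < α) :
    ∫ θ in -π..π, (d + |θ| / (2 * π)) ^ (-α) ≤ 4 * π / (α - 1) * d ^ (1 - α) := by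
  rw [intervalIntegral_comp_abs (fun u => (d + u / (2 * π)) ^ (-α)) pi_pos.le]
  · have hsubst : ∫ θ in (0 : ℝ)..π, (d + θ / (2 * π)) ^ (-α)
        = 2 * π * ∫ u in d..π / (2 * π) + d, u ^ (-α) := by
      simpa [add_comm d] using
        intervalIntegral.integral_comp_div_add (a := 0) (b := π) (fun u : ℝ => u ^ (-α))
          (by positivity : 2 * π ≠ 0) d
    have hend : 0 < π / (2 * π) + d := by positivity
    have hnot : (0 : ℝ) ∉ uIcc d (π / (2 * π) + d) := by
      rw [uIcc_of_le (by linarith [show 0 ≤ π / (2 * π) by positivity])]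
      exact fun h => absurd h.1 (not_le.mpr hd)
    rw [hsubst, integral_rpow (Or.inr ⟨by linarith, hnot⟩)]
    have hflip : ((π / (2 * π) + d) ^ (1 - α) - d ^ (1 - α)) / (1 - α)
        = (d ^ (1 - α) - (π / (2 * π) + d) ^ (1 - α)) / (α - 1) := by
      rw [← neg_sub (d ^ (1 - α)), ← neg_sub α 1, neg_div_neg_eq]
    rw [show -α + 1 = 1 - α by ring, hflip]
    have hb := rpow_nonneg hend.le (1 - α)
    calc 2 * (2 * π * ((d ^ (1 - α) - (π / (2 * π) + d) ^ (1 - α)) / (α - 1)))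
        = 4 * π / (α - 1) * (d ^ (1 - α) - (π / (2 * π) + d) ^ (1 - α)) := by ring
      _ ≤ 4 * π / (α - 1) * d ^ (1 - α) := by
        gcongr
        linarith
  · exact (continuous_add_abs_div_rpow hd α).intervalIntegrable _ _

noncomputable def kernelConst (α : ℝ) : ℝ := 2 ^ α * (4 * π / (α - 1))

lemma kernelConst_nonneg {α : ℝ} (hα : 1 < α) : 0 ≤ kernelConst α :=
  mul_nonneg (by positivity) (div_nonneg (by positivity) (by linarith))

open Real in
lemma integral_norm_one_sub_mul_exp_rpow_le {c : ℂ} (hc : ‖c‖ < 1) {α : ℝ} (hα : 1 < α) :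
    ∫ θ in (0 : ℝ)..2 * π, ‖1 - c * exp (θ * I)‖ ^ (-α)
      ≤ kernelConst α * (1 - ‖c‖) ^ (1 - α) := by
  set ρ := ‖c‖
  set G : ℝ → ℝ := fun θ => ‖1 - (ρ : ℂ) * exp (θ * I)‖ ^ (-α)
  have hG_periodic : Function.Periodic G (2 * π) := by
    simpa [G, circleMap_zero] using
      (periodic_circleMap 0 ρ).comp fun w => ‖1 - w‖ ^ (-α)
  have hrot : ∀ θ : ℝ, ‖1 - c * exp (θ * I)‖ ^ (-α) = G (θ + arg c) := fun θ => by
    have hc_polar : c * exp (θ * I) = ρ * exp (↑(θ + arg c) * I) := by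
      rw [ofReal_add, add_mul, Complex.exp_add]
      nth_rewrite 1 [← norm_mul_exp_arg_mul_I c]
      ring
    simp only [G, hc_polar]
  have hbound : ∀ θ ∈ Icc (-π) π, G θ ≤ 2 ^ α * (1 - ρ + |θ| / (2 * π)) ^ (-α) := by
    intro θ hθ
    have hy : 0 < 1 - ρ + |θ| / (2 * π) := by
      have : 0 ≤ |θ| / (2 * π) := by positivity
      linarith
    calc G θ ≤ ((1 - ρ + |θ| / (2 * π)) / 2) ^ (-α) :=
          rpow_le_rpow_of_nonpos (by positivity) (by
            linarith [one_sub_add_abs_div_le_two_mul_norm (norm_nonneg c) hc.le (abs_le.mpr hθ)])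
            (by linarith)
      _ = 2 ^ α * (1 - ρ + |θ| / (2 * π)) ^ (-α) := by
          rw [div_rpow hy.le zero_le_two, rpow_neg zero_le_two, div_inv_eq_mul, mul_comm]
  have hG_cont : Continuous G := by
    refine Continuous.rpow_const (by fun_prop) fun θ => Or.inl (ne_of_gt ?_)
    have := norm_sub_norm_le (1 : ℂ) (ρ * exp (θ * I))
    rw [norm_one, norm_mul, norm_exp_ofReal_mul_I, norm_real, Real.norm_of_nonneg (norm_nonneg c),
      mul_one] at this
    linarith
  calc ∫ θ in (0 : ℝ)..2 * π, ‖1 - c * exp (θ * I)‖ ^ (-α)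
      = ∫ θ in (0 : ℝ)..2 * π, G (θ + arg c) := by simp only [hrot]
    _ = ∫ θ in -π..-π + 2 * π, G θ := by
        rw [intervalIntegral.integral_comp_add_right, zero_add, add_comm (2 * π),
          hG_periodic.intervalIntegral_add_eq]
    _ ≤ ∫ θ in -π..π, 2 ^ α * (1 - ρ + |θ| / (2 * π)) ^ (-α) := by
        rw [show -π + 2 * π = π by ring]
        refine intervalIntegral.integral_mono_on (by linarith [pi_pos])
          (hG_cont.intervalIntegrable _ _)
          (((continuous_add_abs_div_rpow (by linarith) α).const_mul _).intervalIntegrable _ _)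
          hbound
    _ ≤ kernelConst α * (1 - ρ) ^ (1 - α) := by
        rw [intervalIntegral.integral_const_mul, kernelConst, mul_assoc]
        exact mul_le_mul_of_nonneg_left (integral_add_abs_div_rpow_le (by linarith) hα)
          (by positivity)

lemma finset_sum_rpow_le_sum_rpow {ι : Type*} (s : Finset ι) {x : ι → ℝ} (hx : ∀ i ∈ s, 0 ≤ x i)
    {q : ℝ} (hq0 : 0 < q) (hq1 : q ≤ 1) : (∑ i ∈ s, x i) ^ q ≤ ∑ i ∈ s, x i ^ q :=
  Finset.le_sum_of_subadditive_on_pred (· ^ q) (0 ≤ ·) (by simp [Real.zero_rpow hq0.ne'])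
    (fun _ _ ha hb => Real.rpow_add_le_add_rpow ha hb hq0.le hq1) (fun _ _ => add_nonneg) x hx

lemma intervalIntegral_le_of_tendsto_of_le {F : ℕ → ℝ → ℝ} {f : ℝ → ℝ} {a b C D : ℝ}
    (hF : ∀ N, AEStronglyMeasurable (F N) (volume.restrict (Ι a b)))
    (hD : ∀ N x, ‖F N x‖ ≤ D) (hlim : ∀ x, Tendsto (fun N => F N x) atTop (𝓝 (f x)))
    (hC : ∀ N, ∫ x in a..b, F N x ≤ C) : ∫ x in a..b, f x ≤ C :=
  le_of_tendsto' (intervalIntegral.tendsto_integral_filter_of_dominated_convergence (fun _ => D)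
    (Eventually.of_forall hF) (Eventually.of_forall fun N => ae_of_all _ fun x _ => hD N x)
    intervalIntegrable_const (ae_of_all _ fun x _ => hlim x)) hC

lemma intervalIntegral_rpow_le_mul_integral_rpow {g : ℝ → ℝ} {a b M p q : ℝ} (hab : a ≤ b)
    (hg : Continuous g) (hg0 : ∀ x, 0 ≤ g x) (hgM : ∀ x, g x ≤ M) (hq : 0 < q) (hqp : q ≤ p) :
    ∫ x in a..b, g x ^ p ≤ M ^ (p - q) * ∫ x in a..b, g x ^ q := by
  rw [← intervalIntegral.integral_const_mul]
  refine intervalIntegral.integral_mono_on hab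
    ((hg.rpow_const fun _ => Or.inr (by linarith)).intervalIntegrable _ _)
    ((continuous_const.mul (hg.rpow_const fun _ => Or.inr hq.le)).intervalIntegrable _ _)
    fun x _ => ?_
  calc g x ^ p = g x ^ (p - q) * g x ^ q := by
        rw [← Real.rpow_add' (hg0 x) (by linarith)]; ring_nf
    _ ≤ M ^ (p - q) * g x ^ q :=
        mul_le_mul_of_nonneg_right (Real.rpow_le_rpow (hg0 x) (hgM x) (by linarith))
          (Real.rpow_nonneg (hg0 x) q)

open Real in
lemma rpow_mul_rpow_le_of_antitoneOn_of_monotoneOn {h : ℝ → ℝ} {q s t u : ℝ} (hq : 1 / 2 ≤ q)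
    (hdec : AntitoneOn (fun t => h t / t ^ q) (Ioo 0 1))
    (hinc : MonotoneOn (fun t => h t / t ^ (1 - q)) (Ioo 0 1))
    (hs : s ∈ Ioo 0 1) (ht : t ∈ Ioo 0 1) (hht : 0 < h t) (hsu : s ≤ u) (htu : t ≤ u) :
    s ^ q * u ^ (1 - 2 * q) ≤ h s * t ^ (1 - q) / h t := by
  have hs0 := hs.1
  have ht0 := ht.1
  rcases le_total s t with hst | hts
  · have hcmp : s ^ q ≤ h s * t ^ q / h t := by
      have := hdec hs ht hst
      rw [div_le_div_iff₀ (rpow_pos_of_pos ht0 q) (rpow_pos_of_pos hs0 q)] at this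
      rw [le_div_iff₀ hht]; linarith
    calc s ^ q * u ^ (1 - 2 * q) ≤ (h s * t ^ q / h t) * t ^ (1 - 2 * q) :=
          mul_le_mul hcmp (rpow_le_rpow_of_nonpos ht0 htu (by linarith))
            (rpow_pos_of_pos (ht0.trans_le htu) _).le ((rpow_pos_of_pos hs0 q).le.trans hcmp)
      _ = h s * t ^ (1 - q) / h t := by
          rw [div_mul_eq_mul_div, mul_assoc, ← rpow_add ht0]; ring_nf
  · have hcmp : s ^ (1 - q) ≤ h s * t ^ (1 - q) / h t := by
      have := hinc ht hs hts
      rw [div_le_div_iff₀ (rpow_pos_of_pos ht0 _) (rpow_pos_of_pos hs0 _)] at this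
      rw [le_div_iff₀ hht]; linarith
    calc s ^ q * u ^ (1 - 2 * q) ≤ s ^ q * s ^ (1 - 2 * q) :=
          mul_le_mul_of_nonneg_left (rpow_le_rpow_of_nonpos hs0 hsu (by linarith))
            (rpow_pos_of_pos hs0 q).le
      _ = s ^ (1 - q) := by rw [← rpow_add hs0]; ring_nf
      _ ≤ h s * t ^ (1 - q) / h t := hcmp

lemma integral_norm_deriv_finset_prod_rpow_le {ι : Type*} [DecidableEq ι] (s : Finset ι)
    {f : ι → ℂ → ℂ} (hd : ∀ i ∈ s, DifferentiableOn ℂ (f i) (ball 0 1))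
    (hf : ∀ i ∈ s, ∀ w ∈ ball (0 : ℂ) 1, ‖f i w‖ ≤ 1) {r q : ℝ} (hr : |r| < 1) (hq0 : 0 < q)
    (hq1 : q ≤ 1) :
    ∫ θ in (0 : ℝ)..2 * π, ‖deriv (fun w => ∏ i ∈ s, f i w) (circleMap 0 r θ)‖ ^ q
      ≤ ∑ i ∈ s, ∫ θ in (0 : ℝ)..2 * π, ‖deriv (f i) (circleMap 0 r θ)‖ ^ q := by
  have hcont {g : ℂ → ℂ} (hg : DifferentiableOn ℂ g (ball 0 1)) :
      Continuous fun θ => ‖deriv g (circleMap 0 r θ)‖ ^ q :=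
    (continuous_deriv_comp_circleMap hg hr).norm.rpow_const fun _ => Or.inr hq0.le
  have hw (θ : ℝ) : circleMap 0 r θ ∈ ball (0 : ℂ) 1 := by
    rwa [mem_ball_zero_iff, norm_circleMap_zero]
  rw [← intervalIntegral.integral_finsetSum fun i hi => (hcont (hd i hi)).intervalIntegrable _ _]
  refine intervalIntegral.integral_mono_on (by positivity)
    ((hcont (DifferentiableOn.fun_finsetProd hd)).intervalIntegrable _ _)
    ((continuous_finsetSum _ fun i hi => hcont (hd i hi)).intervalIntegrable _ _) fun θ _ => ?_
  calc ‖deriv (fun w => ∏ i ∈ s, f i w) (circleMap 0 r θ)‖ ^ q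
      ≤ (∑ i ∈ s, ‖deriv (f i) (circleMap 0 r θ)‖) ^ q :=
        Real.rpow_le_rpow (norm_nonneg _) (norm_deriv_finset_prod_le s
          (fun i hi => (hd i hi).differentiableAt (isOpen_ball.mem_nhds (hw θ)))
          fun i hi => hf i hi _ (hw θ)) hq0.le
    _ ≤ ∑ i ∈ s, ‖deriv (f i) (circleMap 0 r θ)‖ ^ q :=
        finset_sum_rpow_le_sum_rpow s (fun _ _ => norm_nonneg _) hq0 hq1

open Real in
lemma integral_norm_deriv_blaschkeFactor_rpow_le {a : ℂ} (ha : ‖a‖ < 1) (ha0 : a ≠ 0) {r : ℝ}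
    (hr0 : 0 ≤ r) (hr1 : r < 1) {q : ℝ} (hq : 1 / 2 < q) :
    ∫ θ in (0 : ℝ)..2 * π, ‖deriv (blaschkeFactor a) (circleMap 0 r θ)‖ ^ q
      ≤ (1 - ‖a‖ ^ 2) ^ q * kernelConst (2 * q) * (1 - ‖a‖ * r) ^ (1 - 2 * q) := by
  set c := (starRingEnd ℂ) a * r
  have hc : ‖c‖ = ‖a‖ * r := by simp [c, abs_of_nonneg hr0]
  have hpoint : ∀ θ : ℝ, ‖deriv (blaschkeFactor a) (circleMap 0 r θ)‖ ^ q
      = (1 - ‖a‖ ^ 2) ^ q * ‖1 - c * exp (θ * I)‖ ^ (-(2 * q)) := fun θ => by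
    have hw : ‖circleMap 0 r θ‖ < 1 := by rwa [norm_circleMap_zero, abs_of_nonneg hr0]
    have hden := blaschkeFactor.norm_one_sub_conj_mul_pos ha hw
    have hsq : (‖1 - (starRingEnd ℂ) a * circleMap 0 r θ‖ ^ 2) ^ q
        = ‖1 - (starRingEnd ℂ) a * circleMap 0 r θ‖ ^ (2 * q) := by
      rw [← rpow_natCast_mul hden.le]; norm_num
    rw [blaschkeFactor.norm_deriv ha ha0 hw,
      div_rpow (by nlinarith [norm_nonneg a]) (by positivity),
      hsq, div_eq_mul_inv, ← rpow_neg hden.le, circleMap_zero, ← mul_assoc]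
  simp only [hpoint]
  rw [intervalIntegral.integral_const_mul, mul_assoc]
  refine mul_le_mul_of_nonneg_left ?_ (rpow_nonneg (by nlinarith [norm_nonneg a]) _)
  have := integral_norm_one_sub_mul_exp_rpow_le (c := c) (by rw [hc]; nlinarith [norm_nonneg a])
    (α := 2 * q) (by linarith)
  rwa [hc] at this

open Real in
lemma integral_norm_deriv_blaschkeFactor_rpow_le_of_antitoneOn_of_monotoneOn {h : ℝ → ℝ} {a : ℂ}
    (ha : ‖a‖ < 1) (ha0 : a ≠ 0) {r q : ℝ} (hr : r ∈ Ioo 0 1) (hq : 1 / 2 < q)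
    (hdec : AntitoneOn (fun t => h t / t ^ q) (Ioo 0 1))
    (hinc : MonotoneOn (fun t => h t / t ^ (1 - q)) (Ioo 0 1)) (hht : 0 < h (1 - r)) :
    ∫ θ in (0 : ℝ)..2 * π, ‖deriv (blaschkeFactor a) (circleMap 0 r θ)‖ ^ q
      ≤ 2 ^ q * kernelConst (2 * q) * (h (1 - ‖a‖) * (1 - r) ^ (1 - q) / h (1 - r)) := by
  have hs : 1 - ‖a‖ ∈ Ioo 0 1 := ⟨by linarith, by linarith [norm_pos_iff.mpr ha0]⟩
  have hK : 0 ≤ kernelConst (2 * q) := kernelConst_nonneg (by linarith)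
  have hweight := rpow_mul_rpow_le_of_antitoneOn_of_monotoneOn (u := 1 - ‖a‖ * r) hq.le hdec hinc
    hs ⟨by linarith [hr.2], by linarith [hr.1]⟩ hht (by nlinarith [hr.2, norm_nonneg a])
    (by nlinarith [hr.1])
  have hfactor : (1 - ‖a‖ ^ 2) ^ q ≤ 2 ^ q * (1 - ‖a‖) ^ q := by
    rw [← mul_rpow zero_le_two hs.1.le]
    exact rpow_le_rpow (by nlinarith [norm_nonneg a]) (by nlinarith [norm_nonneg a]) (by linarith)
  calc ∫ θ in (0 : ℝ)..2 * π, ‖deriv (blaschkeFactor a) (circleMap 0 r θ)‖ ^ q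
      ≤ (1 - ‖a‖ ^ 2) ^ q * kernelConst (2 * q) * (1 - ‖a‖ * r) ^ (1 - 2 * q) :=
        integral_norm_deriv_blaschkeFactor_rpow_le ha ha0 hr.1.le hr.2 hq
    _ ≤ 2 ^ q * (1 - ‖a‖) ^ q * kernelConst (2 * q) * (1 - ‖a‖ * r) ^ (1 - 2 * q) := by
        gcongr
        exact rpow_nonneg (by nlinarith [hr.2, norm_nonneg a]) _
    _ = 2 ^ q * kernelConst (2 * q) * ((1 - ‖a‖) ^ q * (1 - ‖a‖ * r) ^ (1 - 2 * q)) := by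
        ring
    _ ≤ 2 ^ q * kernelConst (2 * q) * (h (1 - ‖a‖) * (1 - r) ^ (1 - q) / h (1 - r)) :=
        mul_le_mul_of_nonneg_left hweight (mul_nonneg (by positivity) hK)

open Real in
lemma integral_norm_deriv_blaschkeProduct_rpow_le {z : ℕ → ℂ} {h : ℝ → ℝ}
    (hz : ∀ n, z n ∈ ball (0 : ℂ) 1) (hz0 : ∀ n, z n ≠ 0) (hb : Summable fun n => 1 - ‖z n‖)
    (hpos : ∀ t ∈ Ioo (0 : ℝ) 1, 0 < h t) (hsum : Summable fun n => h (1 - ‖z n‖))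
    {q : ℝ} (hq1 : 1 / 2 < q) (hq2 : q ≤ 1)
    (hdec : AntitoneOn (fun t => h t / t ^ q) (Ioo 0 1))
    (hinc : MonotoneOn (fun t => h t / t ^ (1 - q)) (Ioo 0 1)) {r : ℝ} (hr : r ∈ Ioo 0 1) :
    ∫ θ in (0 : ℝ)..2 * π, ‖deriv (blaschkeProduct z) (circleMap 0 r θ)‖ ^ q
      ≤ 2 ^ q * kernelConst (2 * q) * (∑' n, h (1 - ‖z n‖))
        * ((1 - r) ^ (1 - q) / h (1 - r)) := by
  set K := 2 ^ q * kernelConst (2 * q)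
  have hK : 0 ≤ K := mul_nonneg (by positivity) (kernelConst_nonneg (by linarith))
  have hq0 : 0 < q := by linarith
  have hz' n : ‖z n‖ < 1 := mem_ball_zero_iff.mp (hz n)
  have hs n : 1 - ‖z n‖ ∈ Ioo (0 : ℝ) 1 :=
    ⟨by linarith [hz' n], by linarith [norm_pos_iff.mpr (hz0 n)]⟩
  have hht : 0 < h (1 - r) := hpos _ ⟨by linarith [hr.2], by linarith [hr.1]⟩
  have hr' : |r| < 1 := by rw [abs_of_pos hr.1]; exact hr.2
  have hw θ : circleMap 0 r θ ∈ ball (0 : ℂ) 1 := by rwa [mem_ball_zero_iff, norm_circleMap_zero]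
  have hpartial N : ∫ θ in (0 : ℝ)..2 * π,
      ‖deriv (fun w => ∏ n ∈ Finset.range N, blaschkeFactor (z n) w) (circleMap 0 r θ)‖ ^ q
      ≤ K * (∑' n, h (1 - ‖z n‖)) * ((1 - r) ^ (1 - q) / h (1 - r)) :=
    calc _ ≤ ∑ n ∈ Finset.range N,
          ∫ θ in (0 : ℝ)..2 * π, ‖deriv (blaschkeFactor (z n)) (circleMap 0 r θ)‖ ^ q :=
          integral_norm_deriv_finset_prod_rpow_le _
            (fun n _ => blaschkeFactor.differentiableOn (hz' n))
            (fun n _ w hw => blaschkeFactor.norm_le_one (hz' n) (mem_ball_zero_iff.mp hw))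
            hr' hq0 hq2
      _ ≤ ∑ n ∈ Finset.range N, K * (h (1 - ‖z n‖) * (1 - r) ^ (1 - q) / h (1 - r)) :=
          Finset.sum_le_sum fun n _ =>
            integral_norm_deriv_blaschkeFactor_rpow_le_of_antitoneOn_of_monotoneOn (hz' n) (hz0 n)
              hr hq1 hdec hinc hht
      _ = K * (∑ n ∈ Finset.range N, h (1 - ‖z n‖)) * ((1 - r) ^ (1 - q) / h (1 - r)) := by
          rw [Finset.mul_sum, Finset.sum_mul]
          exact Finset.sum_congr rfl fun n _ => by ring
      _ ≤ K * (∑' n, h (1 - ‖z n‖)) * ((1 - r) ^ (1 - q) / h (1 - r)) := by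
          gcongr
          · exact div_nonneg (rpow_nonneg (by linarith [hr.2]) _) hht.le
          · exact hsum.sum_le_tsum _ fun n _ => (hpos _ (hs n)).le
  refine intervalIntegral_le_of_tendsto_of_le (D := (2 / (1 - r)) ^ q)
    (fun N => ((continuous_deriv_comp_circleMap (differentiableOn_partialProduct hz N) hr').norm
      |>.rpow_const fun _ => Or.inr hq0.le).aestronglyMeasurable) (fun N θ => ?_)
    (fun θ => (tendsto_deriv_partialProduct hz hz0 hb (hw θ)).norm.rpow_const (Or.inr hq0.le))
    hpartial
  rw [Real.norm_of_nonneg (rpow_nonneg (norm_nonneg _) _)]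
  refine rpow_le_rpow (norm_nonneg _) ?_ hq0.le
  simpa [norm_circleMap_zero, abs_of_pos hr.1] using
    norm_deriv_partialProduct_le hz N (mem_ball_zero_iff.mp (hw θ))

theorem Hp_means_first_deriv_bigO_general (z : ℕ → ℂ) (h : ℝ → ℝ)
    (hz : ∀ n, z n ∈ Metric.ball (0:ℂ) 1) (hz0 : ∀ n, z n ≠ 0)
    (hb : Summable fun n => 1 - ‖z n‖)
    (hpos : ∀ t ∈ Ioo (0:ℝ) 1, 0 < h t)
    (hsum : Summable fun n => h (1 - ‖z n‖))
    (q : ℝ) (hq1 : 1 / 2 < q) (hq2 : q ≤ 1)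
    (hdec : AntitoneOn (fun t => h t / t ^ q) (Ioo 0 1))
    (hinc : MonotoneOn (fun t => h t / t ^ (1 - q)) (Ioo 0 1)) :
    ∀ p : ℝ, q ≤ p →
      (fun r : ℝ => ∫ θ in (0:ℝ)..2 * Real.pi,
          ‖deriv (blaschkeProduct z) ((r : ℂ) * Complex.exp (θ * Complex.I))‖ ^ p)
        =O[𝓝[<] 1] fun r : ℝ => 1 / ((1 - r) ^ (p - 1) * h (1 - r)) := by
  intro p hpq
  set C := 2 ^ q * kernelConst (2 * q) * ∑' n, h (1 - ‖z n‖)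
  refine IsBigO.of_bound (2 ^ (p - q) * C) ?_
  filter_upwards [Ioo_mem_nhdsLT (zero_lt_one' ℝ)] with r hr
  have ht : 0 < 1 - r := by linarith [hr.2]
  have hht : 0 < h (1 - r) := hpos _ ⟨ht, by linarith [hr.1]⟩
  have hr' : |r| < 1 := by rw [abs_of_pos hr.1]; exact hr.2
  have hbloch θ : ‖deriv (blaschkeProduct z) (circleMap 0 r θ)‖ ≤ 2 / (1 - r) := by
    simpa [norm_circleMap_zero, abs_of_pos hr.1] using
      norm_deriv_blaschkeProduct_le hz hz0 hb (w := circleMap 0 r θ) (by rwa [norm_circleMap_zero])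
  have hexp : (1 - r) ^ (1 - q) * (1 - r) ^ (p - 1) = (1 - r) ^ (p - q) := by
    rw [← Real.rpow_add ht]; ring_nf
  simp_rw [← circleMap_zero]
  rw [Real.norm_of_nonneg (intervalIntegral.integral_nonneg (by positivity) fun _ _ =>
    by positivity), Real.norm_of_nonneg (by positivity)]
  calc ∫ θ in (0 : ℝ)..2 * π, ‖deriv (blaschkeProduct z) (circleMap 0 r θ)‖ ^ p
      ≤ (2 / (1 - r)) ^ (p - q)
          * ∫ θ in (0 : ℝ)..2 * π, ‖deriv (blaschkeProduct z) (circleMap 0 r θ)‖ ^ q :=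
        intervalIntegral_rpow_le_mul_integral_rpow (by positivity)
          (continuous_deriv_comp_circleMap (differentiableOn_blaschkeProduct hz hz0 hb) hr').norm
          (fun _ => norm_nonneg _) hbloch (by linarith) hpq
    _ ≤ (2 / (1 - r)) ^ (p - q) * (C * ((1 - r) ^ (1 - q) / h (1 - r))) := by
        gcongr
        exact integral_norm_deriv_blaschkeProduct_rpow_le hz hz0 hb hpos hsum hq1 hq2 hdec hinc hr
    _ = 2 ^ (p - q) * C * (1 / ((1 - r) ^ (p - 1) * h (1 - r))) := by
        rw [Real.div_rpow zero_le_two ht.le, ← hexp]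
        field_simp

theorem Hp_means_first_deriv_bigO (z : ℕ → ℂ) (h : ℝ → ℝ)
    (hz : ∀ n, z n ∈ Metric.ball (0:ℂ) 1) (hz0 : ∀ n, z n ≠ 0)
    (hb : Summable fun n => 1 - ‖z n‖)
    (hcont : ContinuousOn h (Ioo 0 1)) (hpos : ∀ t ∈ Ioo (0:ℝ) 1, 0 < h t)
    (hlim : Tendsto h (𝓝[>] 0) (𝓝 0))
    (hsum : Summable fun n => h (1 - ‖z n‖))
    (q : ℝ) (hq1 : 1 / 2 < q) (hq2 : q ≤ 1)
    (hdec : AntitoneOn (fun t => h t / t ^ q) (Ioo 0 1))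
    (hinc : MonotoneOn (fun t => h t / t ^ (1 - q)) (Ioo 0 1)) :
    ∀ p : ℝ, q ≤ p →
      (fun r : ℝ => ∫ θ in (0:ℝ)..2 * Real.pi,
          ‖deriv (blaschkeProduct z) ((r : ℂ) * Complex.exp (θ * Complex.I))‖ ^ p)
        =O[𝓝[<] 1] fun r : ℝ => 1 / ((1 - r) ^ (p - 1) * h (1 - r)) :=
  Hp_means_first_deriv_bigO_general z h hz hz0 hb hpos hsum q hq1 hq2 hdec hinc
end
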